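/- arXiv:1206.4581 — 6 statements merged into one kernel-verified Lean document; each statement's English description precedes it below -/
import Mathlib

section
/- For barcodes X and Y in the extended barcode space (multisets of intervals [a,b) with 0 ≤ a < b < ∞ such that for every ε > 0 only finitely many intervals have length > ε), if the bottleneck distance d_B(X,Y) = 0 then X = Y. -/
open scoped ENNReal

/-- `(a,b)` represents the half-open interval `[a,b)` with `0 ≤ a < b < ∞`. -/
def IsBarInterval (p : ℝ × ℝ) : Prop := 0 ≤ p.1 ∧ p.1 < p.2

/-- An element of the extended barcode space `B̄`: a multiset of intervals `[a,b)`
(recorded by its multiplicity function) such that for every `ε > 0` only finitely many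
intervals (with multiplicity, each multiplicity being finite) have length `> ε`. -/
structure ExtBarcode where
  mult : ℝ × ℝ → ℕ
  isInterval : ∀ p, mult p ≠ 0 → IsBarInterval p
  finite_long : ∀ ε : ℝ, 0 < ε → {p | mult p ≠ 0 ∧ ε < p.2 - p.1}.Finite

/-- The `d_∞` cost of matching two (possibly empty) intervals:
`d_∞([a,b),[c,d)) = max (|a-c|, |b-d|)`, `d_∞([a,b),∅) = (b-a)/2`, `d_∞(∅,∅) = 0`. -/
noncomputable def optCost : Option (ℝ × ℝ) → Option (ℝ × ℝ) → ℝ≥0∞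
  | some p, some q => ENNReal.ofReal (max |p.1 - q.1| |p.2 - q.2|)
  | some p, none => ENNReal.ofReal ((p.2 - p.1) / 2)
  | none, some q => ENNReal.ofReal ((q.2 - q.1) / 2)
  | none, none => 0

/-- A matching between two barcodes: a multiset of pairs from `(B₁ ∪ {∅}) × (B₂ ∪ {∅})`,
not containing `(∅,∅)`, in which each interval of `B₁` appears as a first coordinate
with its multiplicity, and each interval of `B₂` as a second coordinate with its
multiplicity. -/
structure BMatching (A B : ExtBarcode) where
  m : Option (ℝ × ℝ) × Option (ℝ × ℝ) → ℕ
  not_both_empty : m (none, none) = 0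
  left : ∀ p : ℝ × ℝ, ∑' q : Option (ℝ × ℝ), (m (some p, q) : ℝ≥0∞) = A.mult p
  right : ∀ q : ℝ × ℝ, ∑' p : Option (ℝ × ℝ), (m (p, some q) : ℝ≥0∞) = B.mult q

/-- The cost of a matching: the sup of `d_∞` over the pairs occurring in it. -/
noncomputable def BMatching.cost {A B : ExtBarcode} (C : BMatching A B) : ℝ≥0∞ :=
  ⨆ c ∈ {c | C.m c ≠ 0}, optCost c.1 c.2

/-- The bottleneck distance `d_B`: infimum of the costs of matchings. -/
noncomputable def bottleneckDist (A B : ExtBarcode) : ℝ≥0∞ :=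
  ⨅ C : BMatching A B, C.cost

/-- Total number of intervals of a barcode, counted with multiplicity. -/
noncomputable def ExtBarcode.card (A : ExtBarcode) : ℝ≥0∞ := ∑' p : ℝ × ℝ, (A.mult p : ℝ≥0∞)

/-- Membership in `B_N`: at most `N` intervals (counted with multiplicity). -/
def ExtBarcode.memBN (N : ℕ) (A : ExtBarcode) : Prop := A.card ≤ N

/-- A barcode is finite (lies in `B = ⋃ B_N`) if it has finitely many intervals. -/
def ExtBarcode.IsFinite (A : ExtBarcode) : Prop := {p | A.mult p ≠ 0}.Finite

lemma ExtBarcode.ext' {A B : ExtBarcode} (h : A.mult = B.mult) : A = B := by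
  cases A; cases B; simp_all


/-- if the bottleneck distance between two extended barcodes is `0`,
then they are equal. -/
theorem bottleneckDist_eq_zero_iff_eq (A B : ExtBarcode)
    (h : bottleneckDist A B = 0) : A = B := by
  apply ExtBarcode.ext'
  funext p
  by_cases hI : p.1 < p.2
  swap
  · have hA : A.mult p = 0 := by
      by_contra hA; exact hI (A.isInterval p hA).2
    have hB : B.mult p = 0 := by
      by_contra hB; exact hI (B.isInterval p hB).2
    rw [hA, hB]
  · set δ : ℝ := (p.2 - p.1) / 2 with hδdef
    have hδ : 0 < δ := by simp only [hδdef]; linarith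
    -- finite set of "long" intervals of A or B, other than p
    have hT : ({q | A.mult q ≠ 0 ∧ δ < q.2 - q.1} ∪
        {q | B.mult q ≠ 0 ∧ δ < q.2 - q.1}).Finite :=
      (A.finite_long δ hδ).union (B.finite_long δ hδ)
    set t : Finset (ℝ × ℝ) := hT.toFinset.erase p with ht
    set s : Finset ℝ := insert (δ / 2)
        (t.image (fun q => max |p.1 - q.1| |p.2 - q.2|)) with hs
    have hsne : s.Nonempty := ⟨δ / 2, Finset.mem_insert_self _ _⟩
    set ε : ℝ := s.min' hsne with hε'
    have hεδ : ε ≤ δ / 2 := Finset.min'_le _ _ (Finset.mem_insert_self _ _)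
    have hεT : ∀ q ∈ t, ε ≤ max |p.1 - q.1| |p.2 - q.2| := fun q hq =>
      Finset.min'_le _ _ (Finset.mem_insert_of_mem (Finset.mem_image_of_mem _ hq))
    have hε : 0 < ε := by
      have hmem : ε ∈ s := Finset.min'_mem _ _
      rw [hs, Finset.mem_insert] at hmem
      rcases hmem with h1 | h1
      · rw [h1]; linarith
      · obtain ⟨q, hq, hq2⟩ := Finset.mem_image.mp h1
        have hqp : q ≠ p := Finset.ne_of_mem_erase hq
        rw [← hq2]
        by_contra hc
        push_neg at hc
        have h1 : |p.1 - q.1| ≤ 0 := le_trans (le_max_left _ _) hc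
        have h2 : |p.2 - q.2| ≤ 0 := le_trans (le_max_right _ _) hc
        have e1 : p.1 = q.1 := by
          have := abs_nonneg (p.1 - q.1); have := abs_eq_zero.mp (le_antisymm h1 this); linarith
        have e2 : p.2 = q.2 := by
          have := abs_nonneg (p.2 - q.2); have := abs_eq_zero.mp (le_antisymm h2 this); linarith
        exact hqp (Prod.ext e1.symm e2.symm)
    -- get a matching of cost < ε
    have h0 : bottleneckDist A B < ENNReal.ofReal ε := by
      rw [h]; exact ENNReal.ofReal_pos.mpr hε
    obtain ⟨C, hC⟩ := iInf_lt_iff.mp h0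
    have hcost : ∀ c, C.m c ≠ 0 → optCost c.1 c.2 < ENNReal.ofReal ε := by
      intro c hc
      refine lt_of_le_of_lt ?_ hC
      exact le_iSup₂ (f := fun c (_ : c ∈ {c | C.m c ≠ 0}) => optCost c.1 c.2) c hc
    -- any matched partner of p must be p itself
    have keyR : ∀ q : Option (ℝ × ℝ), C.m (some p, q) ≠ 0 → q = some p := by
      intro q hq
      have hco := hcost _ hq
      match q with
      | none =>
        exfalso
        simp only [optCost] at hco
        have : ENNReal.ofReal ε ≤ ENNReal.ofReal ((p.2 - p.1) / 2) :=
          ENNReal.ofReal_le_ofReal (by linarith)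
        exact absurd hco (not_lt.mpr this)
      | some q' =>
        simp only [optCost] at hco
        have hmax : max |p.1 - q'.1| |p.2 - q'.2| < ε :=
          (ENNReal.ofReal_lt_ofReal_iff hε).mp hco
        have h1 : |p.1 - q'.1| < ε := lt_of_le_of_lt (le_max_left _ _) hmax
        have h2 : |p.2 - q'.2| < ε := lt_of_le_of_lt (le_max_right _ _) hmax
        rw [abs_lt] at h1 h2
        have hlong : δ < q'.2 - q'.1 := by
          simp only [hδdef]; linarith
        have hBq : B.mult q' ≠ 0 := by
          have hle : (C.m (some p, some q') : ℝ≥0∞) ≤ B.mult q' := by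
            rw [← C.right q']
            exact ENNReal.le_tsum (some p)
          intro hz
          rw [hz] at hle
          simp only [Nat.cast_zero, nonpos_iff_eq_zero, Nat.cast_eq_zero] at hle
          exact hq hle
        by_contra hne
        have hq'p : q' ≠ p := fun hh => hne (by rw [hh])
        have hmem : q' ∈ t := by
          rw [ht, Finset.mem_erase]
          refine ⟨hq'p, ?_⟩
          rw [Set.Finite.mem_toFinset]
          exact Or.inr ⟨hBq, hlong⟩
        exact absurd hmax (not_lt.mpr (hεT q' hmem))
    have keyL : ∀ q : Option (ℝ × ℝ), C.m (q, some p) ≠ 0 → q = some p := by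
      intro q hq
      have hco := hcost _ hq
      match q with
      | none =>
        exfalso
        simp only [optCost] at hco
        have : ENNReal.ofReal ε ≤ ENNReal.ofReal ((p.2 - p.1) / 2) :=
          ENNReal.ofReal_le_ofReal (by linarith)
        exact absurd hco (not_lt.mpr this)
      | some q' =>
        simp only [optCost] at hco
        have hmax : max |q'.1 - p.1| |q'.2 - p.2| < ε :=
          (ENNReal.ofReal_lt_ofReal_iff hε).mp hco
        have h1 : |q'.1 - p.1| < ε := lt_of_le_of_lt (le_max_left _ _) hmax
        have h2 : |q'.2 - p.2| < ε := lt_of_le_of_lt (le_max_right _ _) hmax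
        rw [abs_lt] at h1 h2
        have hlong : δ < q'.2 - q'.1 := by
          simp only [hδdef]; linarith
        have hAq : A.mult q' ≠ 0 := by
          have hle : (C.m (some q', some p) : ℝ≥0∞) ≤ A.mult q' := by
            rw [← C.left q']
            exact ENNReal.le_tsum (some p)
          intro hz
          rw [hz] at hle
          simp only [Nat.cast_zero, nonpos_iff_eq_zero, Nat.cast_eq_zero] at hle
          exact hq hle
        by_contra hne
        have hq'p : q' ≠ p := fun hh => hne (by rw [hh])
        have hmem : q' ∈ t := by
          rw [ht, Finset.mem_erase]
          refine ⟨hq'p, ?_⟩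
          rw [Set.Finite.mem_toFinset]
          exact Or.inl ⟨hAq, hlong⟩
        have : ε ≤ max |q'.1 - p.1| |q'.2 - p.2| := by
          rw [abs_sub_comm q'.1 p.1, abs_sub_comm q'.2 p.2]
          exact hεT q' hmem
        exact absurd hmax (not_lt.mpr this)
    -- both multiplicities equal C.m (some p, some p)
    have hAp : (A.mult p : ℝ≥0∞) = C.m (some p, some p) := by
      rw [← C.left p]
      exact tsum_eq_single (some p) (fun q hq => by
        by_contra hc
        have : C.m (some p, q) ≠ 0 := by
          intro hz; rw [hz] at hc; exact hc (by simp)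
        exact hq (keyR q this))
    have hBp : (B.mult p : ℝ≥0∞) = C.m (some p, some p) := by
      rw [← C.right p]
      exact tsum_eq_single (some p) (fun q hq => by
        by_contra hc
        have : C.m (q, some p) ≠ 0 := by
          intro hz; rw [hz] at hc; exact hc (by simp)
        exact hq (keyL q this))
    have := hAp.trans hBp.symm
    exact_mod_cast this
end

section
/- For each N ≥ 0, the space B_N of barcodes containing at most N intervals is complete under the bottleneck metric. -/
open scoped ENNReal

/-!
A barcode with at most `N` intervals can be listed in `2 * N` slots (empty slots holding `none`),
and a matching between two such barcodes can be realised slotwise, with the listing of either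
side fixed in advance up to a permutation. Along a subsequence with `d_B < 2⁻¹ ^ k` between
consecutive terms, the listings can therefore be chosen so that at step `k` every slot moves by
at most `2⁻¹ ^ k`. Each slot then converges in `ℝ × ℝ`, or to `none` when it is empty infinitely
often or its intervals degenerate, and the limits list a barcode with at most `N` intervals at
distance at most `3 * 2⁻¹ ^ k` from the `k`-th term of the subsequence.
-/

open Finset Filter Topology

theorem tsum_card_filter_and_eq {ι β : Type*} [Fintype ι] [DecidableEq β] (P : ι → Prop)
    [DecidablePred P] (f : ι → β) :
    ∑' b, ((#{i | P i ∧ f i = b} : ℕ) : ℝ≥0∞) = #{i | P i} := by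
  simp_rw [card_filter, Nat.cast_sum, Nat.cast_ite, Nat.cast_one, Nat.cast_zero]
  rw [Summable.tsum_finsetSum fun _ _ => ENNReal.summable]
  refine sum_congr rfl fun i _ => ?_
  by_cases hi : P i
  · simp [hi, eq_comm]
  · simp [hi]

theorem tsum_option_of_none {α M : Type*} [AddCommMonoid M] [TopologicalSpace M]
    (f : Option α → M) (hf : f none = 0) : ∑' o, f o = ∑' a, f (some a) := by
  refine ((Option.some_injective _).tsum_eq fun o ho => ?_).symm
  cases o
  exacts [(ho hf).elim, ⟨_, rfl⟩]

theorem finite_support_of_tsum_natCast_ne_top {β : Type*} {m : β → ℕ}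
    (hm : ∑' b, (m b : ℝ≥0∞) ≠ ⊤) : (Function.support m).Finite := by
  refine (ENNReal.finite_const_le_of_tsum_ne_top hm one_ne_zero).subset fun b hb => ?_
  simpa [Nat.one_le_iff_ne_zero] using hb

theorem Multiset.exists_fin_map_eq {β : Type*} {K : ℕ} (M : Multiset β) (hM : M.card = K) :
    ∃ v : Fin K → β, univ.val.map v = M := by
  subst hM
  refine ⟨fun i => M.toList[i.cast (Multiset.length_toList M).symm], ?_⟩
  rw [Fin.univ_val_map]
  conv_rhs => rw [← Multiset.coe_toList M]
  congr 1
  exact List.ext_getElem (by simp) fun i h₁ h₂ => by simp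

theorem exists_fin_card_fiber_eq {β : Type*} [DecidableEq β] (m : β → ℕ) (b₀ : β) {K : ℕ}
    (hK : ∑' b, (m b : ℝ≥0∞) ≤ K) : ∃ v : Fin K → β, ∀ b ≠ b₀, #{i | v i = b} = m b := by
  have hfin := finite_support_of_tsum_natCast_ne_top (hK.trans_lt (ENNReal.natCast_lt_top K)).ne
  set M := Finsupp.toMultiset (Finsupp.ofSupportFinite m hfin)
  have hcount : ∀ b, M.count b = m b := fun b => by simp [M, Finsupp.ofSupportFinite_coe]
  have hcard : Multiset.card M ≤ K := by
    have : (Multiset.card M : ℝ≥0∞) ≤ K := by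
      rw [← Multiset.toFinset_sum_count_eq, Nat.cast_sum]
      refine (ENNReal.sum_le_tsum _).trans ?_
      simpa only [hcount] using hK
    exact_mod_cast this
  obtain ⟨v, hv⟩ := (M + Multiset.replicate (K - Multiset.card M) b₀).exists_fin_map_eq
    (by rw [Multiset.card_add, Multiset.card_replicate, Nat.add_sub_cancel' hcard])
  refine ⟨v, fun b hb => ?_⟩
  have := congrArg (Multiset.count b) hv
  rw [Multiset.count_map, Multiset.count_add, Multiset.count_replicate, if_neg hb.symm, hcount,
    add_zero] at this
  rw [← this, card_def, filter_val]
  simp_rw [eq_comm]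

theorem ENNReal.sum_Ico_inv_two_pow_le (k m : ℕ) :
    ∑ j ∈ Ico k m, (2⁻¹ : ℝ≥0∞) ^ j ≤ 2 * 2⁻¹ ^ k := by
  rw [sum_Ico_eq_sum_range]
  calc ∑ j ∈ range (m - k), (2⁻¹ : ℝ≥0∞) ^ (k + j)
      ≤ ∑' j, (2⁻¹ : ℝ≥0∞) ^ (k + j) := ENNReal.sum_le_tsum _
    _ = 2 * 2⁻¹ ^ k := by
      simp_rw [pow_add, ENNReal.tsum_mul_left, ENNReal.tsum_geometric, ENNReal.one_sub_inv_two,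
        inv_inv, mul_comm]

theorem optCost_comm (x y : Option (ℝ × ℝ)) : optCost x y = optCost y x := by
  cases x <;> cases y <;> simp [optCost, abs_sub_comm]

theorem optCost_some_some (p q : ℝ × ℝ) : optCost (some p) (some q) = edist p q := by
  simp [optCost, edist_dist, Prod.dist_eq, Real.dist_eq]

/-- Through `none`, two short intervals are close however far apart they lie. -/
theorem optCost_triangle {x y z : Option (ℝ × ℝ)} (h : y = none → x = none ∨ z = none) :
    optCost x z ≤ optCost x y + optCost y z := by
  rcases x with _ | p <;> rcases y with _ | q <;> rcases z with _ | r <;>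
    simp only [optCost, zero_add, add_zero, le_refl, zero_le] <;> try simp at h
  all_goals refine le_trans (ENNReal.ofReal_le_ofReal ?_) ENNReal.ofReal_add_le
  all_goals grind

/-- `v` lists the intervals of `A` with multiplicity, unused slots holding `none`. -/
def IsEnumeration {ι : Type*} [Fintype ι] (v : ι → Option (ℝ × ℝ)) (A : ExtBarcode) : Prop :=
  ∀ p, #{i | v i = some p} = A.mult p

noncomputable def ExtBarcode.ofFn {ι : Type*} [Fintype ι] (v : ι → Option (ℝ × ℝ))
    (hv : ∀ i p, v i = some p → IsBarInterval p) : ExtBarcode where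
  mult p := #{i | v i = some p}
  isInterval p hp := by
    obtain ⟨i, hi⟩ := card_ne_zero.mp hp
    exact hv i p (by simpa using hi)
  finite_long _ _ := by
    refine ((Set.finite_range v).preimage (Option.some_injective _).injOn).subset ?_
    rintro p ⟨hp, -⟩
    obtain ⟨i, hi⟩ := card_ne_zero.mp hp
    exact ⟨i, by simpa using hi⟩

namespace IsEnumeration

variable {ι : Type*} [Fintype ι] {v w : ι → Option (ℝ × ℝ)} {A B : ExtBarcode}

theorem isBarInterval (hv : IsEnumeration v A) {i : ι} {p : ℝ × ℝ} (hi : v i = some p) :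
    IsBarInterval p :=
  A.isInterval p <| hv p ▸ card_ne_zero.mpr ⟨i, by simpa using hi⟩

theorem card_eq (hv : IsEnumeration v A) : A.card = #{i | v i ≠ none} := by
  rw [← tsum_card_filter_and_eq _ fun i => (v i).getD 0, ExtBarcode.card]
  refine tsum_congr fun p => ?_
  rw [← hv p]
  congr 2
  ext i
  cases hi : v i <;> simp [hi]

theorem card_le_card (hv : IsEnumeration v A) (hw : IsEnumeration w B)
    (h : ∀ i, w i ≠ none → v i ≠ none) : B.card ≤ A.card := by
  rw [hv.card_eq, hw.card_eq]
  exact_mod_cast Finset.card_le_card fun i => by simpa using h i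

theorem comp_perm (hv : IsEnumeration v A) (σ : Equiv.Perm ι) : IsEnumeration (v ∘ σ) A := by
  intro p
  rw [← hv p, card_filter, card_filter]
  exact Equiv.sum_comp σ fun i => if v i = some p then 1 else 0

theorem exists_perm (hv : IsEnumeration v A) (hw : IsEnumeration w A) :
    ∃ σ : Equiv.Perm ι, v = w ∘ σ := by
  have hfiber : ∀ c, #{i | v i = c} = #{i | w i = c}
    | some p => (hv p).trans (hw p).symm
    | none => by
      have hsome : #{i | v i ≠ none} = #{i | w i ≠ none} := by
        exact_mod_cast hv.card_eq.symm.trans hw.card_eq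
      simp only [ne_eq] at hsome
      have hv' := card_filter_add_card_filter_not (s := univ) fun i => v i = none
      have hw' := card_filter_add_card_filter_not (s := univ) fun i => w i = none
      omega
  let e c : {i // v i = c} ≃ {i // w i = c} :=
    Fintype.equivOfCardEq <| by simpa only [Fintype.card_subtype] using hfiber c
  exact ⟨Equiv.ofFiberEquiv e, funext fun i => (Equiv.ofFiberEquiv_map e i).symm⟩

end IsEnumeration

theorem ExtBarcode.exists_isEnumeration (A : ExtBarcode) {K : ℕ} (hA : A.card ≤ K) :
    ∃ v : Fin K → Option (ℝ × ℝ), IsEnumeration v A := by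
  obtain ⟨v, hv⟩ := exists_fin_card_fiber_eq (fun o => o.elim 0 A.mult) none (K := K)
    (by rwa [tsum_option_of_none _ (by simp)])
  exact ⟨v, fun p => hv (some p) (Option.some_ne_none p)⟩

namespace BMatching

variable {A B : ExtBarcode}

theorem tsum_le_card_add_card (C : BMatching A B) :
    ∑' c, (C.m c : ℝ≥0∞) ≤ A.card + B.card := by
  have hA : ∑' c, (if c.1 = none then 0 else (C.m c : ℝ≥0∞)) = A.card := by
    rw [ENNReal.tsum_prod', tsum_option_of_none _ (by simp)]
    simp [ExtBarcode.card, C.left]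
  have hB : ∑' c, (if c.2 = none then 0 else (C.m c : ℝ≥0∞)) = B.card := by
    rw [ENNReal.tsum_prod', ENNReal.tsum_comm, tsum_option_of_none _ (by simp)]
    simp [ExtBarcode.card, C.right]
  calc ∑' c, (C.m c : ℝ≥0∞)
      ≤ ∑' c, ((if c.1 = none then 0 else (C.m c : ℝ≥0∞)) +
          if c.2 = none then 0 else (C.m c : ℝ≥0∞)) := by
        refine ENNReal.tsum_le_tsum fun c => ?_
        rcases c with ⟨_ | p, _ | q⟩ <;> simp [C.not_both_empty]
    _ = A.card + B.card := by rw [ENNReal.tsum_add, hA, hB]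

theorem exists_isEnumeration (C : BMatching A B) {K : ℕ} (hK : A.card + B.card ≤ K) :
    ∃ v w : Fin K → Option (ℝ × ℝ), IsEnumeration v A ∧ IsEnumeration w B ∧
      ∀ i, optCost (v i) (w i) ≤ C.cost := by
  obtain ⟨r, hr⟩ := exists_fin_card_fiber_eq C.m (none, none) (C.tsum_le_card_add_card.trans hK)
  refine ⟨fun i => (r i).1, fun i => (r i).2, fun p => ?_, fun q => ?_, fun i => ?_⟩
  · rw [← Nat.cast_inj (R := ℝ≥0∞), ← C.left, ← tsum_card_filter_and_eq _ fun i => (r i).2]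
    refine tsum_congr fun q => ?_
    rw [← hr (some p, q) (by simp)]
    simp [Prod.ext_iff]
  · rw [← Nat.cast_inj (R := ℝ≥0∞), ← C.right, ← tsum_card_filter_and_eq _ fun i => (r i).1]
    refine tsum_congr fun p => ?_
    rw [← hr (p, some q) (by simp)]
    simp [Prod.ext_iff, and_comm]
  · by_cases hi : r i = (none, none)
    · simp [hi, optCost]
    · have : C.m (r i) ≠ 0 := hr _ hi ▸ card_ne_zero.mpr ⟨i, by simp⟩
      exact le_iSup₂ (f := fun c (_ : c ∈ {c | C.m c ≠ 0}) => optCost c.1 c.2) (r i) this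

end BMatching

section

variable {ι : Type*} [Fintype ι] {v w : ι → Option (ℝ × ℝ)} {A B : ExtBarcode}

noncomputable def BMatching.ofIsEnumeration (hv : IsEnumeration v A) (hw : IsEnumeration w B) :
    BMatching A B where
  m c := if c = (none, none) then 0 else #{i | (v i, w i) = c}
  not_both_empty := if_pos rfl
  left p := by
    rw [← hv p, ← tsum_card_filter_and_eq _ w]
    exact tsum_congr fun q => by simp [Prod.ext_iff]
  right q := by
    rw [← hw q, ← tsum_card_filter_and_eq _ v]
    exact tsum_congr fun p => by simp [Prod.ext_iff, and_comm]

theorem bottleneckDist_le_of_isEnumeration (hv : IsEnumeration v A) (hw : IsEnumeration w B)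
    {ε : ℝ≥0∞} (h : ∀ i, optCost (v i) (w i) ≤ ε) : bottleneckDist A B ≤ ε := by
  refine (iInf_le _ (BMatching.ofIsEnumeration hv hw)).trans (iSup₂_le fun c hc => ?_)
  obtain ⟨i, hi⟩ : ∃ i, (v i, w i) = c := by
    by_contra! hne
    simp [BMatching.ofIsEnumeration, hne] at hc
  exact hi ▸ h i

end

theorem IsEnumeration.exists_near {K : ℕ} {v : Fin K → Option (ℝ × ℝ)} {A B : ExtBarcode}
    (hv : IsEnumeration v A) (hK : A.card + B.card ≤ K) {ε : ℝ≥0∞}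
    (hAB : bottleneckDist A B < ε) :
    ∃ w : Fin K → Option (ℝ × ℝ), IsEnumeration w B ∧ ∀ i, optCost (v i) (w i) ≤ ε := by
  obtain ⟨C, hC⟩ := iInf_lt_iff.mp hAB
  obtain ⟨v', w', hv', hw', hC'⟩ := C.exists_isEnumeration hK
  obtain ⟨σ, rfl⟩ := hv.exists_perm hv'
  exact ⟨w' ∘ σ, hw'.comp_perm σ, fun i => (hC' (σ i)).trans hC.le⟩

theorem exists_isEnumeration_seq {K : ℕ} (a : ℕ → ExtBarcode)
    (hK : ∀ k, (a k).card + (a (k + 1)).card ≤ K) (ε : ℕ → ℝ≥0∞)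
    (hd : ∀ k, bottleneckDist (a k) (a (k + 1)) < ε k) :
    ∃ f : ℕ → Fin K → Option (ℝ × ℝ),
      (∀ k, IsEnumeration (f k) (a k)) ∧ ∀ k i, optCost (f k i) (f (k + 1) i) ≤ ε k := by
  obtain ⟨v₀, hv₀⟩ := (a 0).exists_isEnumeration (le_self_add.trans (hK 0))
  choose! next hnext using fun k (v : Fin K → Option (ℝ × ℝ)) (hv : IsEnumeration v (a k)) =>
    hv.exists_near (hK k) (hd k)
  let f : ℕ → Fin K → Option (ℝ × ℝ) := fun k => Nat.rec v₀ next k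
  have hf : ∀ k, IsEnumeration (f k) (a k) := fun k => by
    induction k with
    | zero => exact hv₀
    | succ k ih => exact (hnext k (f k) ih).1
  exact ⟨f, hf, fun k => (hnext k (f k) (hf k)).2⟩

theorem optCost_le_of_frequently_none {x : ℕ → Option (ℝ × ℝ)}
    (hx : ∀ k, optCost (x k) (x (k + 1)) ≤ 2⁻¹ ^ k) (hnone : ∀ m, ∃ k ≥ m, x k = none)
    (k : ℕ) : optCost (x k) none ≤ 2 * 2⁻¹ ^ k := by
  have hsum : ∀ m ≥ k, optCost (x k) none ≤ ∑ j ∈ Ico k m, 2⁻¹ ^ j + optCost (x m) none := by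
    intro m hm
    induction m, hm using Nat.le_induction with
    | base => simp
    | succ m hm ih =>
      have hstep := optCost_triangle (x := x m) (y := x (m + 1)) (z := none) fun _ => Or.inr rfl
      calc optCost (x k) none ≤ ∑ j ∈ Ico k m, 2⁻¹ ^ j + optCost (x m) none := ih
        _ ≤ ∑ j ∈ Ico k m, 2⁻¹ ^ j + (2⁻¹ ^ m + optCost (x (m + 1)) none) := by
          gcongr
          exact hstep.trans (add_le_add (hx m) le_rfl)
        _ = _ := by rw [sum_Ico_succ_top hm, add_assoc]
  obtain ⟨m, hkm, hm⟩ := hnone k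
  have hzero : optCost none none = 0 := rfl
  calc optCost (x k) none ≤ ∑ j ∈ Ico k m, 2⁻¹ ^ j := by
        simpa only [hm, hzero, add_zero] using hsum m hkm
    _ ≤ 2 * 2⁻¹ ^ k := ENNReal.sum_Ico_inv_two_pow_le k m

theorem exists_optCost_le_of_edist_le_geometric_two {p : ℕ → ℝ × ℝ} (hp₀ : ∀ n, 0 ≤ (p n).1)
    {C : ℝ≥0∞} (hC : C ≠ ⊤) (hp : ∀ n, edist (p n) (p (n + 1)) ≤ C / 2 ^ n) :
    ∃ y : Option (ℝ × ℝ), (∀ q, y = some q → IsBarInterval q) ∧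
      ∀ n, optCost (some (p n)) y ≤ 2 * C / 2 ^ n := by
  obtain ⟨q, hq⟩ := cauchySeq_tendsto_of_complete (cauchySeq_of_edist_le_geometric_two C hC hp)
  have hpq := edist_le_of_edist_le_geometric_two_of_tendsto C hp hq
  have hq₀ : 0 ≤ q.1 := ge_of_tendsto' ((continuous_fst.tendsto q).comp hq) hp₀
  by_cases hlt : q.1 < q.2
  · refine ⟨some q, fun _ h => Option.some_inj.mp h ▸ ⟨hq₀, hlt⟩, fun n => ?_⟩
    exact (optCost_some_some _ _).trans_le (hpq n)
  -- a limit `[a, a)` of intervals is the empty interval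
  refine ⟨none, by simp, fun n => ?_⟩
  have hdeg : optCost (some q) none = 0 := by
    simp only [optCost, ENNReal.ofReal_eq_zero]
    linarith
  calc optCost (some (p n)) none ≤ optCost (some (p n)) (some q) + optCost (some q) none :=
        optCost_triangle (by simp)
    _ ≤ 2 * C / 2 ^ n := by rw [hdeg, add_zero, optCost_some_some]; exact hpq n

theorem exists_limit_of_optCost_le {x : ℕ → Option (ℝ × ℝ)}
    (hx : ∀ k, optCost (x k) (x (k + 1)) ≤ 2⁻¹ ^ k)
    (hvalid : ∀ k p, x k = some p → IsBarInterval p) :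
    ∃ (y : Option (ℝ × ℝ)) (K₀ : ℕ), (∀ q, y = some q → IsBarInterval q) ∧
      (y ≠ none → ∀ k ≥ K₀, x k ≠ none) ∧ ∀ k ≥ K₀, optCost (x k) y ≤ 2 * 2⁻¹ ^ k := by
  by_cases hnone : ∀ m, ∃ k ≥ m, x k = none
  · exact ⟨none, 0, by simp, by simp, fun k _ => optCost_le_of_frequently_none hx hnone k⟩
  push Not at hnone
  obtain ⟨K₀, hK₀⟩ := hnone
  choose p hp using fun n => Option.ne_none_iff_exists'.mp (hK₀ (K₀ + n) (Nat.le_add_right _ _))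
  have hscale : ∀ n, (2⁻¹ : ℝ≥0∞) ^ (K₀ + n) = 2⁻¹ ^ K₀ / 2 ^ n := fun n => by
    rw [pow_add, div_eq_mul_inv, ENNReal.inv_pow]
  obtain ⟨y, hy, hyd⟩ := exists_optCost_le_of_edist_le_geometric_two
    (fun n => (hvalid _ _ (hp n)).1) (C := 2⁻¹ ^ K₀) (by simp) fun n => by
      have := hx (K₀ + n)
      rwa [add_assoc, hp, hp, optCost_some_some, hscale] at this
  refine ⟨y, K₀, hy, fun _ => hK₀, fun k hk => ?_⟩
  obtain ⟨n, rfl⟩ := Nat.exists_eq_add_of_le hk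
  rw [hp, hscale, ← mul_div_assoc]
  exact hyd n

theorem bottleneckDist_le_add_of_isEnumeration {K : ℕ} {v y : Fin K → Option (ℝ × ℝ)}
    {A B L : ExtBarcode} (hv : IsEnumeration v A) (hy : IsEnumeration y L)
    (hK : A.card + B.card ≤ K) {δ δ' : ℝ≥0∞} (hAB : bottleneckDist A B < δ)
    (hvy : ∀ i, optCost (v i) (y i) ≤ δ') (hnone : ∀ i, v i = none → y i = none) :
    bottleneckDist B L ≤ δ + δ' := by
  obtain ⟨w, hw, hvw⟩ := hv.exists_near hK hAB
  refine bottleneckDist_le_of_isEnumeration hw hy fun i => ?_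
  calc optCost (w i) (y i) ≤ optCost (w i) (v i) + optCost (v i) (y i) :=
        optCost_triangle fun h => Or.inr (hnone i h)
    _ ≤ δ + δ' := add_le_add ((optCost_comm _ _).trans_le (hvw i)) (hvy i)

/-- for each `N ≥ 0`, the space `B_N` of barcodes with at most `N`
intervals is complete under the bottleneck metric: every Cauchy sequence in `B_N`
converges (in the bottleneck metric) to a barcode in `B_N`. -/
theorem BN_complete (N : ℕ) (u : ℕ → ExtBarcode) (hu : ∀ n, (u n).memBN N)
    (hcauchy : ∀ ε : ℝ≥0∞, 0 < ε →
      ∃ M : ℕ, ∀ m n : ℕ, M ≤ m → M ≤ n → bottleneckDist (u m) (u n) < ε) :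
    ∃ L : ExtBarcode, L.memBN N ∧
      ∀ ε : ℝ≥0∞, 0 < ε → ∃ M : ℕ, ∀ n : ℕ, M ≤ n → bottleneckDist (u n) L < ε := by
  have hcard : ∀ m n, (u m).card + (u n).card ≤ (2 * N : ℕ) := fun m n => by
    push_cast
    rw [two_mul]
    exact add_le_add (hu m) (hu n)
  obtain ⟨φ, hφ, hφd⟩ := extraction_forall_of_eventually fun k =>
    let ⟨M, hM⟩ := hcauchy (2⁻¹ ^ k) (ENNReal.pow_pos (by norm_num) k)
    eventually_atTop.mpr ⟨M, fun _ hM' m n hm hn => hM m n (hM'.trans hm) (hM'.trans hn)⟩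
  obtain ⟨f, hf, hfd⟩ := exists_isEnumeration_seq (fun k => u (φ k)) (fun k => hcard _ _) _
    fun k => hφd k _ _ le_rfl (hφ.monotone k.le_succ)
  choose y K₀ hy hynone hyd using fun i =>
    exists_limit_of_optCost_le (fun k => hfd k i) fun k _ => (hf k).isBarInterval
  have hL : IsEnumeration y (ExtBarcode.ofFn y hy) := fun _ => rfl
  have hK₀ : ∀ i k, univ.sup K₀ ≤ k → K₀ i ≤ k := fun i k hk => (le_sup (mem_univ i)).trans hk
  refine ⟨ExtBarcode.ofFn y hy, ?_, fun ε hε => ?_⟩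
  · exact ((hf _).card_le_card hL fun i hi => hynone i hi _ (hK₀ i _ le_rfl)).trans (hu _)
  have htend : Tendsto (fun k => (2⁻¹ : ℝ≥0∞) ^ k + 2 * 2⁻¹ ^ k) atTop (𝓝 0) := by
    have h := ENNReal.tendsto_pow_atTop_nhds_zero_of_lt_one (r := 2⁻¹) (by norm_num)
    simpa using h.add (ENNReal.Tendsto.const_mul h (Or.inr (by simp)))
  obtain ⟨k, hk, hkε⟩ :=
    ((eventually_ge_atTop (univ.sup K₀)).and (htend.eventually (gt_mem_nhds hε))).exists
  refine ⟨φ k, fun n hn => lt_of_le_of_lt ?_ hkε⟩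
  exact bottleneckDist_le_add_of_isEnumeration (hf k) hL (hcard _ _) (hφd k _ n le_rfl hn)
    (fun i => hyd i k (hK₀ i k hk)) fun i h => not_not.mp fun h' => hynone i h' k (hK₀ i k hk) h
end

section
/- For finite metric spaces X ⊂ X' with uniform probability measures, d_GPr(X, X') ≤ 1 - |X|/|X'|; consequently for any function F from metric measure spaces to a metric space satisfying d(F(M),F(M')) ≤ n·d_GPr(M,M'), the invariant F is uniformly robust with robustness coefficient r and estimate bound nr/(1+r) for every r > 0: whenever |X'|/|X| < 1+r, one has d(F(X),F(X')) < nr/(1+r). -/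
/-!
Inside `X'` itself, the uniform measure on `s` is the uniform measure `ν` on `X'` conditioned
on `s`. For any probability measure `ν` and any set `C`, conditioning on `s` moves the mass of `C`
by at most `ν sᶜ`: `ν C ≤ ν[C|s] + ν sᶜ` and `ν[C|s] ≤ ν C + ν sᶜ`. Hence already the
Lévy–Prokhorov distance in `X'` is at most `ν sᶜ = 1 - |s|/|X'|`, which is `< r/(1+r)` as soon
as `|X'| < (1+r)|s|`.
-/

open MeasureTheory
open scoped ENNReal

/-- The uniform probability measure on a finite type. -/
noncomputable def uniformMeasure (X : Type) [Fintype X] [MeasurableSpace X] : Measure X :=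
  (Fintype.card X : ℝ≥0∞)⁻¹ • Measure.count

open ProbabilityTheory Metric

lemma levyProkhorovEDist_le_of_forall_measurableSet {Ω : Type*} [MeasurableSpace Ω]
    [PseudoEMetricSpace Ω] (μ ν : Measure Ω) (δ : ℝ≥0∞)
    (h : ∀ B, MeasurableSet B → μ B ≤ ν B + δ ∧ ν B ≤ μ B + δ) :
    levyProkhorovEDist μ ν ≤ δ := by
  refine levyProkhorovEDist_le_of_forall μ ν δ fun ε B hδε hε hB => ?_
  have hB_sub : B ⊆ thickening ε.toReal B :=
    self_subset_thickening (ENNReal.toReal_pos (zero_le.trans_lt hδε).ne' hε.ne) B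
  exact ⟨(h B hB).1.trans (add_le_add (measure_mono hB_sub) hδε.le),
    (h B hB).2.trans (add_le_add (measure_mono hB_sub) hδε.le)⟩

section Cond

variable {Ω : Type*} [MeasurableSpace Ω] (ν : Measure Ω) [IsProbabilityMeasure ν] {s : Set Ω}

lemma measure_le_cond_add_measure_compl (hs : MeasurableSet s) (C : Set Ω) :
    ν C ≤ ν[C|s] + ν sᶜ := by
  rw [cond_apply hs]
  calc ν C ≤ ν (s ∩ C) + ν (C \ s) := by
        rw [Set.inter_comm, measure_inter_add_sdiff₀ _ hs.nullMeasurableSet]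
    _ ≤ (ν s)⁻¹ * ν (s ∩ C) + ν sᶜ := by
        gcongr
        · exact le_mul_of_one_le_left' (ENNReal.one_le_inv.2 prob_le_one)
        · exact Set.sdiff_subset_compl C s

lemma cond_le_measure_add_measure_compl (hs : MeasurableSet s) (C : Set Ω) :
    ν[C|s] ≤ ν C + ν sᶜ := by
  rw [cond_apply hs]
  rcases eq_or_ne (ν s) 0 with hs0 | hs0
  · simp [measure_mono_null Set.inter_subset_left hs0]
  rw [ENNReal.inv_mul_le_iff hs0 (measure_ne_top ν s)]
  calc ν (s ∩ C) = ν s * ν (s ∩ C) + ν sᶜ * ν (s ∩ C) := by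
        rw [← add_mul, measure_add_measure_compl hs, measure_univ, one_mul]
    _ ≤ ν s * ν C + ν sᶜ * ν s := by
        gcongr
        exacts [Set.inter_subset_right, Set.inter_subset_left]
    _ = ν s * (ν C + ν sᶜ) := by ring

lemma levyProkhorovEDist_cond_le [PseudoEMetricSpace Ω] (hs : MeasurableSet s) :
    levyProkhorovEDist ν[|s] ν ≤ ν sᶜ :=
  levyProkhorovEDist_le_of_forall_measurableSet _ _ _ fun C _ =>
    ⟨cond_le_measure_add_measure_compl ν hs C, measure_le_cond_add_measure_compl ν hs C⟩

end Cond

section Uniform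

variable {X : Type} [Fintype X] [MeasurableSpace X] [MeasurableSingletonClass X]

lemma uniformMeasure_apply_finset (s : Finset X) :
    uniformMeasure X s = s.card / Fintype.card X := by
  simp [uniformMeasure, ENNReal.div_eq_inv_mul]

variable [Nonempty X]

instance isProbabilityMeasure_uniformMeasure : IsProbabilityMeasure (uniformMeasure X) :=
  ⟨by rw [← Finset.coe_univ, uniformMeasure_apply_finset, Finset.card_univ,
    ENNReal.div_self (by simp) (by simp)]⟩

lemma map_subtype_val_uniformMeasure (s : Finset X) :
    (uniformMeasure s).map Subtype.val = (uniformMeasure X)[|↑s] := by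
  ext C hC
  have hcount : Measure.count (Subtype.val ⁻¹' C : Set s) = Measure.count (↑s ∩ C) := by
    rw [Measure.count_apply (measurable_subtype_coe hC),
      Measure.count_apply (s.measurableSet.inter hC), ← Subtype.val_injective.encard_image,
      Set.image_preimage_eq_range_inter, Subtype.range_coe_subtype, Finset.setOfPred_mem]
  rw [Measure.map_apply measurable_subtype_coe hC, cond_apply s.measurableSet,
    uniformMeasure_apply_finset]
  simp only [uniformMeasure, Measure.smul_apply, smul_eq_mul, Fintype.card_coe, hcount]
  rw [ENNReal.div_eq_inv_mul, ENNReal.mul_inv (by simp) (by simp), inv_inv, mul_assoc,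
    mul_left_comm, ENNReal.mul_inv_cancel_left (by simp) (by simp)]

lemma toReal_uniformMeasure_compl (s : Finset X) :
    (uniformMeasure X (↑s)ᶜ).toReal = 1 - s.card / Fintype.card X := by
  rw [prob_compl_eq_one_sub s.measurableSet,
    ENNReal.toReal_sub_of_le prob_le_one ENNReal.one_ne_top, uniformMeasure_apply_finset,
    ENNReal.toReal_div]
  simp

end Uniform

lemma one_sub_div_lt_div_one_add {m N r : ℝ} (hm : 0 ≤ m) (hN : 0 < N) (h : N < (1 + r) * m) :
    1 - m / N < r / (1 + r) := by
  have hr : 0 < 1 + r := pos_of_mul_pos_left (hN.trans h) hm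
  rw [sub_lt_iff_lt_add, div_add_div _ _ hr.ne' hN.ne', lt_div_iff₀ (by positivity)]
  nlinarith

theorem uniform_robustness_general {X' B : Type} [MetricSpace X'] [Fintype X'] [Nonempty X']
    [MeasurableSpace X'] [BorelSpace X'] [MetricSpace B]
    (s : Finset X')
    (n : ℕ) (hn : 0 < n) (r : ℝ)
    (b b' : B)
    (hF : ∀ (Z : Type) (_ : MetricSpace Z) (_ : MeasurableSpace Z) (_ : BorelSpace Z)
        (φ : {x // x ∈ s} → Z) (ψ : X' → Z),
        Isometry φ → Isometry ψ → Measurable φ → Measurable ψ →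
        dist b b' ≤ (n : ℝ) *
          levyProkhorovDist (Measure.map φ (uniformMeasure {x // x ∈ s}))
            (Measure.map ψ (uniformMeasure X')))
    (hcard : (Fintype.card X' : ℝ) < (1 + r) * s.card) :
    (∃ (Z : Type) (_ : MetricSpace Z) (_ : MeasurableSpace Z) (_ : BorelSpace Z)
      (φ : {x // x ∈ s} → Z) (ψ : X' → Z),
        Isometry φ ∧ Isometry ψ ∧ Measurable φ ∧ Measurable ψ ∧
        levyProkhorovDist (Measure.map φ (uniformMeasure {x // x ∈ s}))
            (Measure.map ψ (uniformMeasure X')) ≤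
          1 - (s.card : ℝ) / Fintype.card X') ∧
    dist b b' < (n : ℝ) * r / (1 + r) := by
  have hlp : levyProkhorovDist ((uniformMeasure s).map Subtype.val)
      ((uniformMeasure X').map id) ≤ 1 - (s.card : ℝ) / Fintype.card X' := by
    rw [Measure.map_id, map_subtype_val_uniformMeasure, levyProkhorovDist,
      ← toReal_uniformMeasure_compl]
    exact ENNReal.toReal_mono (measure_ne_top _ _) (levyProkhorovEDist_cond_le _ s.measurableSet)
  refine ⟨⟨X', inferInstance, inferInstance, inferInstance, Subtype.val, id, isometry_subtype_coe,
    isometry_id, measurable_subtype_coe, measurable_id, hlp⟩, ?_⟩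
  have hN : (0 : ℝ) < Fintype.card X' := by exact_mod_cast Fintype.card_pos
  calc dist b b' ≤ n * levyProkhorovDist ((uniformMeasure s).map Subtype.val)
        ((uniformMeasure X').map id) :=
        hF X' inferInstance inferInstance inferInstance _ _ isometry_subtype_coe isometry_id
          measurable_subtype_coe measurable_id
    _ ≤ n * (1 - (s.card : ℝ) / Fintype.card X') := by gcongr
    _ < n * (r / (1 + r)) := by
        gcongr
        exact one_sub_div_lt_div_one_add (Nat.cast_nonneg _) hN hcard
    _ = n * r / (1 + r) := (mul_div_assoc _ _ _).symm

/-- for finite metric spaces `X ⊆ X'` with uniform probability measures,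
`d_GPr(X,X') ≤ 1 - |X|/|X'|` (the bound is witnessed by an embedding into a common
metric space); consequently any invariant `F` of metric measure spaces taking values in
a metric space and satisfying `d(F(M),F(M')) ≤ n · d_GPr(M,M')` (expressed below by
the hypothesis that `d(F(X),F(X'))` is at most `n` times the embedded Prohorov
distance for every isometric embedding into a common space) is uniformly robust with
robustness coefficient `r` and estimate bound `nr/(1+r)`: if `|X'|/|X| < 1+r` then
`d(F(X),F(X')) < nr/(1+r)`. -/
theorem uniform_robustness {X' B : Type} [MetricSpace X'] [Fintype X'] [Nonempty X']
    [MeasurableSpace X'] [BorelSpace X'] [MetricSpace B]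
    (s : Finset X') (hs : s.Nonempty)
    (n : ℕ) (hn : 0 < n) (r : ℝ) (hr : 0 < r)
    (b b' : B)
    (hF : ∀ (Z : Type) (_ : MetricSpace Z) (_ : MeasurableSpace Z) (_ : BorelSpace Z)
        (φ : {x // x ∈ s} → Z) (ψ : X' → Z),
        Isometry φ → Isometry ψ → Measurable φ → Measurable ψ →
        dist b b' ≤ (n : ℝ) *
          levyProkhorovDist (Measure.map φ (uniformMeasure {x // x ∈ s}))
            (Measure.map ψ (uniformMeasure X')))
    (hcard : (Fintype.card X' : ℝ) < (1 + r) * s.card) :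
    (∃ (Z : Type) (_ : MetricSpace Z) (_ : MeasurableSpace Z) (_ : BorelSpace Z)
      (φ : {x // x ∈ s} → Z) (ψ : X' → Z),
        Isometry φ ∧ Isometry ψ ∧ Measurable φ ∧ Measurable ψ ∧
        levyProkhorovDist (Measure.map φ (uniformMeasure {x // x ∈ s}))
            (Measure.map ψ (uniformMeasure X')) ≤
          1 - (s.card : ℝ) / Fintype.card X') ∧
    dist b b' < (n : ℝ) * r / (1 + r) :=
  uniform_robustness_general s n hn r b b' hF hcard
end

section
/- Let X be a nonempty finite metric space embedded isometrically in a finite metric space X' with |X|/|X'| > 2^{-1/n}, i.e., (|X|/|X'|)ⁿ > 1/2. Then for any real-valued function f on n-element multisets of points, the median of f over n-tuples drawn uniformly from X' lies between the minimum and maximum of f over n-tuples drawn from X. Consequently, for any n, the median-of-subsamples statistic is robust with robustness coefficient r for any r < 2^{1/n} - 1, and in particular for r = (ln 2)/n. -/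
/-- let `X ⊆ X'` be finite (metric) spaces with `(|X|/|X'|)ⁿ > 1/2`,
i.e. more than half of the `n`-element samples (with repetition) of `X'` lie in `X`.
Then any median `med` of a real-valued function `f` over `n`-tuples from `X'` (i.e.
any value such that both `{f ≤ med}` and `{f ≥ med}` contain at least half of all
`n`-tuples) lies between values of `f` attained on `n`-tuples from `X`.  Consequently
the median-of-subsamples statistic is robust with robustness coefficient `r` for any
`r < 2^{1/n} - 1`, and in particular for `r = (ln 2)/n` since `(ln 2)/n < 2^{1/n}-1`. -/
theorem median_subsample_robust {X' : Type} [Fintype X'] [MetricSpace X']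
    (s : Finset X') (hs : s.Nonempty) (n : ℕ) (hn : 0 < n)
    (hcard : Fintype.card X' ^ n < 2 * s.card ^ n)
    (f : (Fin n → X') → ℝ) (med : ℝ)
    (hmed₁ : Fintype.card (Fin n → X') ≤ 2 * Nat.card {t : Fin n → X' // f t ≤ med})
    (hmed₂ : Fintype.card (Fin n → X') ≤ 2 * Nat.card {t : Fin n → X' // med ≤ f t}) :
    ((∃ t : Fin n → X', (∀ i, t i ∈ s) ∧ f t ≤ med) ∧
     (∃ t : Fin n → X', (∀ i, t i ∈ s) ∧ med ≤ f t)) ∧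
    (∀ r : ℝ, 0 < r → r < 2 ^ ((1 : ℝ) / n) - 1 →
      (Fintype.card X' : ℝ) < (1 + r) * s.card →
      (Fintype.card X' : ℝ) ^ n < 2 * (s.card : ℝ) ^ n) ∧
    Real.log 2 / n < 2 ^ ((1 : ℝ) / n) - 1 := by
  classical
  have main : ∀ (P : (Fin n → X') → Prop),
      Fintype.card (Fin n → X') ≤ 2 * Nat.card {t : Fin n → X' // P t} →
      ∃ t : Fin n → X', (∀ i, t i ∈ s) ∧ P t := by
    intro P hP
    set S := Fintype.piFinset (fun _ : Fin n => s) with hSdef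
    set T := Finset.univ.filter P with hTdef
    have hScard : S.card = s.card ^ n := by
      simp [hSdef]
    have hTcard : Nat.card {t : Fin n → X' // P t} = T.card := by
      simp [hTdef, Nat.card_eq_fintype_card, Fintype.card_subtype]
    have hU : (S ∪ T).card ≤ Fintype.card (Fin n → X') := Finset.card_le_univ _
    have hI := Finset.card_union_add_card_inter S T
    have hfun : Fintype.card (Fin n → X') = Fintype.card X' ^ n := by
      simp
    have hne : (S ∩ T).Nonempty := by
      rw [← Finset.card_pos]
      omega
    obtain ⟨t, ht⟩ := hne
    rw [Finset.mem_inter] at ht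
    refine ⟨t, ?_, ?_⟩
    · intro i
      exact Fintype.mem_piFinset.mp ht.1 i
    · exact (Finset.mem_filter.mp ht.2).2
  have hn' : (0 : ℝ) < n := by exact_mod_cast hn
  have h2exp : (2 : ℝ) ^ ((1 : ℝ) / n) = Real.exp (Real.log 2 / n) := by
    rw [Real.rpow_def_of_pos two_pos, mul_one_div]
  have hx : (0 : ℝ) < Real.log 2 / n := div_pos (Real.log_pos one_lt_two) hn'
  have hexp := Real.add_one_lt_exp hx.ne'
  have hlog : Real.log 2 / n < 2 ^ ((1 : ℝ) / n) - 1 := by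
    rw [h2exp]; linarith
  refine ⟨⟨main _ hmed₁, main _ hmed₂⟩, ?_, hlog⟩
  intro r hr hr2 hcard'
  have hs1 : (0 : ℝ) < s.card := by exact_mod_cast hs.card_pos
  have h1 : (Fintype.card X' : ℝ) ^ n ≤ ((1 + r) * s.card) ^ n :=
    pow_le_pow_left₀ (Nat.cast_nonneg _) hcard'.le n
  have h2n : ((1 + r : ℝ)) ^ n < 2 := by
    have hlt : (1 + r : ℝ) < 2 ^ ((1 : ℝ) / n) := by linarith
    calc (1 + r : ℝ) ^ n < (2 ^ ((1 : ℝ) / n)) ^ n :=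
          pow_lt_pow_left₀ hlt (by positivity) hn.ne'
      _ = 2 := by
          rw [← Real.rpow_natCast (2 ^ ((1 : ℝ) / n)) n, ← Real.rpow_mul (by norm_num),
            one_div, inv_mul_cancel₀ (by exact_mod_cast hn.ne')]
          simp
  calc (Fintype.card X' : ℝ) ^ n ≤ ((1 + r) * s.card) ^ n := h1
    _ = (1 + r) ^ n * (s.card : ℝ) ^ n := mul_pow _ _ _
    _ < 2 * (s.card : ℝ) ^ n := mul_lt_mul_of_pos_right h2n (by positivity)
end

section
/- Let Z be a nonempty finite metric space. Then the function X ↦ d_GH(Z,X) on finite metric spaces is extremely fragile: there is a constant k = 1 such that for every nonempty finite metric space X and every N > 0 there is a metric space X' containing X isometrically with |X'| = |X| + 1 and |d_GH(Z,X') - d_GH(Z,X)| > N. -/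
/-!
The Gromov–Hausdorff distance controls diameters: `diam Y ≤ diam X + 2 d_GH(X, Y)`, since a
set lies in the closed `r`-thickening of any set within Hausdorff distance `r` of it. Adjoining
to `X` one point at distance `a` from every point is a metric as soon as `diam X ≤ 2a`, and it
makes the diameter at least `a`; taking `a > diam Z + 2 d_GH(Z, X) + 2N` then forces
`d_GH(Z, X') > d_GH(Z, X) + N`.
-/

open Bornology Metric Set

namespace Metric

variable {α : Type*} [PseudoMetricSpace α] {s t : Set α}

theorem subset_cthickening_hausdorffDist (hfin : hausdorffEDist s t ≠ ⊤) :
    t ⊆ cthickening (hausdorffDist s t) s := fun _ hy ↦ by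
  rw [mem_cthickening_iff, hausdorffDist, ENNReal.ofReal_toReal hfin, hausdorffEDist_comm]
  exact infEDist_le_hausdorffEDist_of_mem hy

theorem diam_le_diam_add_two_mul_hausdorffDist (hs : IsBounded s)
    (hfin : hausdorffEDist s t ≠ ⊤) : diam t ≤ diam s + 2 * hausdorffDist s t :=
  (diam_mono (subset_cthickening_hausdorffDist hfin) hs.cthickening).trans
    (diam_cthickening_le s hausdorffDist_nonneg)

end Metric

namespace GromovHausdorff

theorem diam_univ_le_diam_univ_add_two_mul_ghDist (X Y : Type*) [MetricSpace X] [CompactSpace X]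
    [Nonempty X] [MetricSpace Y] [CompactSpace Y] [Nonempty Y] :
    diam (univ : Set Y) ≤ diam (univ : Set X) + 2 * ghDist X Y := by
  obtain ⟨Φ, Ψ, hΦ, hΨ, hgh⟩ := ghDist_eq_hausdorffDist X Y
  have hΦb : IsBounded (range Φ) := (isCompact_range hΦ.continuous).isBounded
  have hΨb : IsBounded (range Ψ) := (isCompact_range hΨ.continuous).isBounded
  have hfin := hausdorffEDist_ne_top_of_nonempty_of_bounded (range_nonempty Φ)
    (range_nonempty Ψ) hΦb hΨb
  rw [← hΦ.diam_range, ← hΨ.diam_range, hgh]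
  exact diam_le_diam_add_two_mul_hausdorffDist hΦb hfin

end GromovHausdorff

namespace Option

variable {X : Type*} [MetricSpace X]

def distWithApex (a : ℝ) : Option X → Option X → ℝ
  | some x, some y => dist x y
  | none, none => 0
  | _, _ => a

abbrev metricSpaceWithApex (a : ℝ) (ha : 0 < a) (hX : ∀ x y : X, dist x y ≤ 2 * a) :
    MetricSpace (Option X) where
  dist := distWithApex a
  dist_self p := by cases p <;> simp [distWithApex]
  dist_comm p q := by cases p <;> cases q <;> simp only [distWithApex, dist_comm]
  dist_triangle p q r := by
    rcases p with _ | x <;> rcases q with _ | y <;> rcases r with _ | z <;>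
      simp only [distWithApex]
    · simp
    · linarith
    · linarith
    · linarith [dist_nonneg (x := y) (y := z)]
    · linarith
    · linarith [hX x z]
    · linarith [dist_nonneg (x := x) (y := y)]
    · exact dist_triangle x y z
  eq_of_dist_eq_zero {p q} h := by
    rcases p with _ | x <;> rcases q with _ | y
    · rfl
    · exact absurd h ha.ne'
    · exact absurd h ha.ne'
    · exact congrArg some (dist_eq_zero.mp h)

end Option

/-- for a nonempty finite metric space `Z`, the function
`X ↦ d_GH(Z,X)` on finite metric spaces is extremely fragile (with constant `k = 1`):
for every nonempty finite metric space `X` and every `N > 0` there is a finite metric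
space `X'` containing `X` isometrically, with exactly one extra point, such that
`|d_GH(Z,X') - d_GH(Z,X)| > N`. -/
theorem ghDist_extremely_fragile {Z : Type} [MetricSpace Z] [Fintype Z] [Nonempty Z]
    (X : Type) [MetricSpace X] [Fintype X] [Nonempty X] (N : ℝ) (hN : 0 < N) :
    ∃ (X' : Type) (_ : MetricSpace X') (fX' : Fintype X') (_ : Nonempty X')
      (ι : X → X'), Isometry ι ∧ fX'.card = Fintype.card X + 1 ∧
      N < |GromovHausdorff.ghDist Z X' - GromovHausdorff.ghDist Z X| := by
  have hgh : 0 ≤ GromovHausdorff.ghDist Z X := dist_nonneg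
  have hdZ : 0 ≤ diam (univ : Set Z) := diam_nonneg
  have hdX : 0 ≤ diam (univ : Set X) := diam_nonneg
  set a := diam (univ : Set Z) + 2 * GromovHausdorff.ghDist Z X + 2 * N
    + diam (univ : Set X) + 1
  have ha : 0 < a := by positivity
  have hXa (x y : X) : dist x y ≤ 2 * a := by
    have := dist_le_diam_of_mem isBounded_of_compactSpace (mem_univ x) (mem_univ y)
    linarith
  let _ := Option.metricSpaceWithApex a ha hXa
  refine ⟨Option X, _, inferInstance, inferInstance, some, Isometry.of_dist_eq fun _ _ ↦ rfl,
    Fintype.card_option, lt_of_lt_of_le ?_ (le_abs_self _)⟩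
  have hapex : a ≤ diam (univ : Set (Option X)) :=
    dist_le_diam_of_mem (x := none) (y := some (Classical.arbitrary X))
      isBounded_of_compactSpace (mem_univ _) (mem_univ _)
  have := GromovHausdorff.diam_univ_le_diam_univ_add_two_mul_ghDist Z (Option X)
  linarith
end

section
/- Let S¹_{k,ℓ} be the metric space on k points x₀,…,x_{k-1} with d(xᵢ,xⱼ) = ℓ·min(|i-j|, k-|i-j|). For ℓ ≤ ε < ⌈k/3⌉·ℓ, the Vietoris-Rips complex VR_ε(S¹_{k,ℓ}) has first homology of rank at least 1 (with field coefficients). -/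
/-!
The proof pairs chains with the winding cochain `φ(a, b) = circDisplacement k a b`, the
representative of `b - a` modulo `k` of least absolute value; it is the discrete analogue of `dθ`
on the punctured disk. Every edge of `VR_ε` spans fewer than `k / 3` steps, so on a triangle of
`VR_ε` the three representatives add up exactly, without wrapping around: `φ` is a cocycle of
`VR_ε` and pairs to zero with every boundary. Yet it pairs to `k ≠ 0` with the fundamental cycle
`[x₀,x₁] + ⋯ + [x_{k-1},x₀]`.
-/

/-- The metric circle `S¹_{k,ℓ}`: `k` equally spaced points with
`d(xᵢ,xⱼ) = ℓ·min(|i-j|, k-|i-j|)`. -/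
noncomputable def circDist (k : ℕ) (ℓ : ℝ) (i j : Fin k) : ℝ :=
  ℓ * (min (((i : ℤ) - (j : ℤ)).natAbs) (k - ((i : ℤ) - (j : ℤ)).natAbs) : ℕ)

/-- The simplicial boundary map `∂₁` on (oriented) `1`-chains with `ℚ`-coefficients of
a complex with vertex set `Fin k`: `∂₁[a,b] = [b] - [a]`. -/
def bd1 (k : ℕ) (c : Fin k × Fin k → ℚ) : Fin k → ℚ :=
  fun v => ∑ e : Fin k × Fin k,
    c e * ((if e.2 = v then 1 else 0) - (if e.1 = v then 1 else 0))

/-- The simplicial boundary map `∂₂` on `2`-chains with `ℚ`-coefficients: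
`∂₂[a,b,c] = [b,c] - [a,c] + [a,b]`. -/
def bd2 (k : ℕ) (c : Fin k × Fin k × Fin k → ℚ) : Fin k × Fin k → ℚ :=
  fun e => ∑ t : Fin k × Fin k × Fin k,
    c t * ((if (t.2.1, t.2.2) = e then 1 else 0) - (if (t.1, t.2.2) = e then 1 else 0)
      + (if (t.1, t.2.1) = e then 1 else 0))


open Finset

def circDisplacement (k : ℕ) (a b : Fin k) : ℤ := Int.bmod ((b : ℤ) - a) k

section Displacement

variable {k : ℕ}

theorem circDisplacement_modEq (a b : Fin k) :
    circDisplacement k a b ≡ (b : ℤ) - a [ZMOD k] :=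
  Int.bmod_emod

theorem natAbs_circDisplacement (a b : Fin k) :
    (circDisplacement k a b).natAbs = min ((a : ℤ) - b).natAbs (k - ((a : ℤ) - b).natAbs) := by
  have ha := a.isLt
  have hb := b.isLt
  have hmod : ((b : ℤ) - a) % k = if (a : ℤ) ≤ b then (b : ℤ) - a else (b : ℤ) - a + k := by
    split_ifs
    · exact Int.emod_eq_of_lt (by omega) (by omega)
    · rw [← Int.add_emod_right]
      exact Int.emod_eq_of_lt (by omega) (by omega)
  rw [circDisplacement, Int.bmod_def, hmod]
  split_ifs <;> omega

theorem circDist_eq_mul_natAbs_circDisplacement (ℓ : ℝ) (a b : Fin k) :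
    circDist k ℓ a b = ℓ * (circDisplacement k a b).natAbs := by
  rw [circDist, natAbs_circDisplacement]

theorem circDisplacement_add_one [NeZero k] (hk : 3 ≤ k) (a : Fin k) :
    circDisplacement k a (a + 1) = 1 := by
  have hmod : ((a + 1 : Fin k) : ℤ) - a ≡ 1 [ZMOD k] := by
    simpa using (show ((a + 1 : Fin k) : ℤ) ≡ a + 1 [ZMOD k] by
      simp [Int.ModEq, Fin.val_add, Int.add_emod]).sub_right (a : ℤ)
  rw [circDisplacement, ← Int.emod_bmod, hmod.eq, Int.emod_bmod]
  exact Int.bmod_eq_of_le (by omega) (by omega)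

theorem circDisplacement_add_of_short {a b c : Fin k} (hab : 3 * |circDisplacement k a b| < k)
    (hbc : 3 * |circDisplacement k b c| < k) (hac : 3 * |circDisplacement k a c| < k) :
    circDisplacement k a b + circDisplacement k b c = circDisplacement k a c := by
  have hdvd : (k : ℤ) ∣ circDisplacement k a b + circDisplacement k b c - circDisplacement k a c :=
    (Int.modEq_zero_iff_dvd).1 <| by
      simpa using ((circDisplacement_modEq a b).add (circDisplacement_modEq b c)).sub
        (circDisplacement_modEq a c)
  have hsmall : |circDisplacement k a b + circDisplacement k b c - circDisplacement k a c| < k := by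
    have := abs_sub (circDisplacement k a b + circDisplacement k b c) (circDisplacement k a c)
    have := abs_add_le (circDisplacement k a b) (circDisplacement k b c)
    omega
  exact sub_eq_zero.1 (Int.eq_zero_of_abs_lt_dvd hdvd hsmall)

theorem lt_ceil_div_three_iff (m k : ℕ) : m < ⌈(k : ℝ) / 3⌉₊ ↔ 3 * m < k := by
  rw [Nat.lt_ceil, lt_div_iff₀ (by norm_num), mul_comm]
  exact_mod_cast Iff.rfl

theorem three_mul_abs_circDisplacement_lt {ℓ : ℝ} (hℓ : 0 < ℓ) {a b : Fin k}
    (h : circDist k ℓ a b < ⌈(k : ℝ) / 3⌉₊ * ℓ) : 3 * |circDisplacement k a b| < k := by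
  rw [circDist_eq_mul_natAbs_circDisplacement, mul_comm] at h
  have := (lt_ceil_div_three_iff _ k).1 (by exact_mod_cast lt_of_mul_lt_mul_right h hℓ.le)
  rw [Int.abs_eq_natAbs]
  omega

end Displacement

section Chains

variable {k : ℕ}

def fundamentalCycle (k : ℕ) [NeZero k] : Fin k × Fin k → ℚ :=
  fun e => if e.2 = e.1 + 1 then 1 else 0

theorem sum_fundamentalCycle_mul [NeZero k] (f : Fin k × Fin k → ℚ) :
    ∑ e, fundamentalCycle k e * f e = ∑ a, f (a, a + 1) := by
  simp [fundamentalCycle, Fintype.sum_prod_type]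

theorem bd1_fundamentalCycle [NeZero k] : bd1 k (fundamentalCycle k) = 0 := by
  funext v
  simp only [bd1, sum_fundamentalCycle_mul, sum_sub_distrib, ← eq_sub_iff_add_eq]
  simp

theorem sum_bd2_mul (w : Fin k × Fin k × Fin k → ℚ) (f : Fin k × Fin k → ℚ) :
    ∑ e, bd2 k w e * f e = ∑ t, w t * (f (t.2.1, t.2.2) - f (t.1, t.2.2) + f (t.1, t.2.1)) := by
  simp only [bd2, sum_mul]
  rw [sum_comm]
  refine sum_congr rfl fun t _ => ?_
  simp only [mul_assoc, ← mul_sum, sub_mul, add_mul, sum_sub_distrib, sum_add_distrib, ite_mul,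
    one_mul, zero_mul, sum_ite_eq, mem_univ, if_true]

theorem sum_bd2_mul_eq_zero {w : Fin k × Fin k × Fin k → ℚ} {f : Fin k × Fin k → ℚ}
    (hf : ∀ t, w t ≠ 0 → f (t.1, t.2.1) + f (t.2.1, t.2.2) = f (t.1, t.2.2)) :
    ∑ e, bd2 k w e * f e = 0 := by
  rw [sum_bd2_mul]
  refine sum_eq_zero fun t _ => ?_
  by_cases ht : w t = 0
  · rw [ht, zero_mul]
  · rw [← hf t ht]
    ring

end Chains

/-- for `ℓ ≤ ε < ⌈k/3⌉·ℓ`, the Vietoris–Rips complex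
`VR_ε(S¹_{k,ℓ})` has first homology of rank at least `1` (with field coefficients,
here `ℚ`): there is a `1`-cycle supported on the edges of `VR_ε` (pairs at distance
`≤ ε`) which is not the boundary of any `2`-chain supported on the triangles of
`VR_ε` (triples with pairwise distances `≤ ε`). -/
theorem vietorisRips_circle_H1_nontrivial (k : ℕ) (ℓ ε : ℝ) (hℓ : 0 < ℓ)
    (h1 : ℓ ≤ ε) (h2 : ε < (⌈(k : ℝ) / 3⌉₊ : ℝ) * ℓ) :
    ∃ z : Fin k × Fin k → ℚ,
      (∀ e, z e ≠ 0 → circDist k ℓ e.1 e.2 ≤ ε) ∧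
      bd1 k z = 0 ∧
      ∀ w : Fin k × Fin k × Fin k → ℚ,
        (∀ t, w t ≠ 0 → circDist k ℓ t.1 t.2.1 ≤ ε ∧ circDist k ℓ t.1 t.2.2 ≤ ε ∧
          circDist k ℓ t.2.1 t.2.2 ≤ ε) →
        bd2 k w ≠ z := by
  have hk : 3 < k := by
    have hC : 1 < (⌈(k : ℝ) / 3⌉₊ : ℝ) := (lt_mul_iff_one_lt_left hℓ).1 (h1.trans_lt h2)
    simpa using (lt_ceil_div_three_iff 1 k).1 (by exact_mod_cast hC)
  have : NeZero k := ⟨by omega⟩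
  have short (a b : Fin k) (h : circDist k ℓ a b ≤ ε) : 3 * |circDisplacement k a b| < k :=
    three_mul_abs_circDisplacement_lt hℓ (h.trans_lt h2)
  refine ⟨fundamentalCycle k, ?_, bd1_fundamentalCycle, ?_⟩
  · rintro ⟨a, b⟩ he
    obtain rfl : b = a + 1 := by simpa [fundamentalCycle] using he
    simpa [circDist_eq_mul_natAbs_circDisplacement, circDisplacement_add_one hk.le] using h1
  · intro w hw hwz
    have hcocycle : ∑ e, bd2 k w e * (circDisplacement k e.1 e.2 : ℚ) = 0 :=
      sum_bd2_mul_eq_zero fun t ht => by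
        obtain ⟨h01, h02, h12⟩ := hw t ht
        exact_mod_cast circDisplacement_add_of_short (short _ _ h01) (short _ _ h12) (short _ _ h02)
    rw [hwz, sum_fundamentalCycle_mul] at hcocycle
    simp only [circDisplacement_add_one hk.le, Int.cast_one, sum_const, card_univ,
      Fintype.card_fin, nsmul_eq_mul, mul_one, Nat.cast_eq_zero] at hcocycle
    omega
end
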